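/- Let K ⊂ ℝ³ be a centrally symmetric convex body which is strongly convex with smooth boundary (K ∈ 𝒦̂). Then Θ(Y(π)K) = π − Θ(K), Φ(Y(π)K) = π − Φ(K), Ψ(Y(π)K) = Ψ(K), and F(Y(π)K) = −F(K), G(Y(π)K) = −G(K), H(Y(π)K) = H(K). -/

import Mathlib

open MeasureTheory Real Set
open scoped RealInnerProductSpace

noncomputable section

/-- Euclidean 3-space. -/
abbrev E3 := EuclideanSpace ℝ (Fin 3)

/-- The point `(a, b, c)` of `ℝ³`. -/
def pt (a b c : ℝ) : E3 := (WithLp.equiv 2 (Fin 3 → ℝ)).symm ![a, b, c]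

/-- The polar body `K° = {y : ⟪x, y⟫ ≤ 1 for all x ∈ K}`. -/
def polarBody (K : Set E3) : Set E3 := {y : E3 | ∀ x ∈ K, ⟪x, y⟫ ≤ 1}

/-- The radial function `ρ_K(x) = max {t ≥ 0 : t • x ∈ K}`. -/
def radial (K : Set E3) (x : E3) : ℝ := sSup {t : ℝ | 0 ≤ t ∧ t • x ∈ K}

/-- The spherical parametrization `P(α, β)`. -/
def sphP (α β : ℝ) : E3 := pt (cos α) (sin α * cos β) (sin α * sin β)

/-- Rotation by angle `θ` about the `x`-axis. -/
def rotX (θ : ℝ) (p : E3) : E3 :=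
  pt (p 0) (cos θ * p 1 - sin θ * p 2) (sin θ * p 1 + cos θ * p 2)

/-- Rotation by angle `φ` about the `y`-axis. -/
def rotY (φ : ℝ) (p : E3) : E3 :=
  pt (cos φ * p 0 + sin φ * p 2) (p 1) (-sin φ * p 0 + cos φ * p 2)

/-- Rotation by angle `ψ` about the `z`-axis. -/
def rotZ (ψ : ℝ) (p : E3) : E3 :=
  pt (cos ψ * p 0 - sin ψ * p 1) (sin ψ * p 0 + cos ψ * p 1) (p 2)

/-- `K ∈ 𝒦̂`: a centrally symmetric convex body in `ℝ³` which is strongly convex with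
smooth boundary, i.e. `h_K = gauge²/2` is `C^∞` away from the origin and has positive
definite Hessian at every point of the unit sphere. -/
def IsKhat (K : Set E3) : Prop :=
  IsCompact K ∧ Convex ℝ K ∧ (interior K).Nonempty ∧ K = -K ∧
    ContDiffOn ℝ (⊤ : ℕ∞) (fun x => gauge K x ^ 2 / 2) {0}ᶜ ∧
    ∀ x : E3, ‖x‖ = 1 → ∀ v : E3, v ≠ 0 →
      0 < fderiv ℝ (fderiv ℝ (fun y => gauge K y ^ 2 / 2)) x v v

/-- `Θ` satisfies the defining property of `Θ(K)`. -/
def ThetaEq (K : Set E3) (Θ : ℝ) : Prop :=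
  Θ ∈ Ioo 0 π ∧
    ∫ β in (0:ℝ)..Θ, ∫ α in (0:ℝ)..π, radial K (sphP α β) ^ 3 * sin α
      = ∫ β in Θ..π, ∫ α in (0:ℝ)..π, radial K (sphP α β) ^ 3 * sin α

/-- `Φ` satisfies the defining property of `Φ(K)`. -/
def PhiEq (K : Set E3) (Φ : ℝ) : Prop :=
  Φ ∈ Ioo 0 π ∧
    ∫ α in (0:ℝ)..Φ, radial K (sphP α 0) ^ 2 = ∫ α in Φ..π, radial K (sphP α 0) ^ 2

/-- `Ψ` satisfies the defining property of `Ψ(K)`, where `Θ = Θ(K)`. -/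
def PsiEq (K : Set E3) (Θ Ψ : ℝ) : Prop :=
  Ψ ∈ Ioo 0 π ∧
    ∫ α in (0:ℝ)..Ψ, radial K (sphP α Θ) ^ 2 = ∫ α in Ψ..π, radial K (sphP α Θ) ^ 2

/-- The unitriangular map whose inverse is the matrix `𝒜(K)` (for `Θ = Θ(K)`, `Φ = Φ(K)`,
`Ψ = Ψ(K)`); thus the body `𝒜(K) K` is the preimage `shear Θ Φ Ψ ⁻¹' K`. -/
def shear (Θ Φ Ψ : ℝ) (p : E3) : E3 :=
  pt (p 0 + p 1 / tan Φ + p 2 / (sin Θ * tan Ψ)) (p 1 + p 2 / tan Θ) (p 2)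

/-- `v₁ = vol(L ∩ {x ≥ 0, y ≥ 0, z ≥ 0})`. -/
def vol₁ (L : Set E3) : ℝ := (volume (L ∩ {p : E3 | 0 ≤ p 0 ∧ 0 ≤ p 1 ∧ 0 ≤ p 2})).toReal

/-- `v₂ = vol(L ∩ {x ≤ 0, y ≥ 0, z ≥ 0})`. -/
def vol₂ (L : Set E3) : ℝ := (volume (L ∩ {p : E3 | p 0 ≤ 0 ∧ 0 ≤ p 1 ∧ 0 ≤ p 2})).toReal

/-- `v₃ = vol(L ∩ {x ≤ 0, y ≤ 0, z ≥ 0})`. -/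
def vol₃ (L : Set E3) : ℝ := (volume (L ∩ {p : E3 | p 0 ≤ 0 ∧ p 1 ≤ 0 ∧ 0 ≤ p 2})).toReal

/-- `v₄ = vol(L ∩ {x ≥ 0, y ≤ 0, z ≥ 0})`. -/
def vol₄ (L : Set E3) : ℝ := (volume (L ∩ {p : E3 | 0 ≤ p 0 ∧ p 1 ≤ 0 ∧ 0 ≤ p 2})).toReal

/-- `F` applied to the transformed body `L' = 𝒜(K) K`. -/
def Ffun (L : Set E3) : ℝ :=
  (μH[2] (L ∩ {p : E3 | p 0 = 0 ∧ 0 ≤ p 1 ∧ 0 ≤ p 2})).toReal -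
    (μH[2] (L ∩ {p : E3 | p 0 = 0 ∧ p 1 ≤ 0 ∧ 0 ≤ p 2})).toReal

/-- `G = v₁ + v₃ - v₂ - v₄` applied to the transformed body `L' = 𝒜(K) K`. -/
def Gfun (L : Set E3) : ℝ := vol₁ L + vol₃ L - vol₂ L - vol₄ L

/-- `H = v₁ + v₄ - v₂ - v₃` applied to the transformed body `L' = 𝒜(K) K`. -/
def Hfun (L : Set E3) : ℝ := vol₁ L + vol₄ L - vol₂ L - vol₃ L

/-- Condition (★). -/
def StarCond (K : Set E3) : Prop :=
  volume (K ∩ {p : E3 | 0 ≤ p 0 ∧ 0 ≤ p 1 ∧ 0 ≤ p 2})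
      = volume (K ∩ {p : E3 | p 0 ≤ 0 ∧ 0 ≤ p 1 ∧ 0 ≤ p 2}) ∧
    volume (K ∩ {p : E3 | p 0 ≤ 0 ∧ 0 ≤ p 1 ∧ 0 ≤ p 2})
      = volume (K ∩ {p : E3 | p 0 ≤ 0 ∧ p 1 ≤ 0 ∧ 0 ≤ p 2}) ∧
    volume (K ∩ {p : E3 | p 0 ≤ 0 ∧ p 1 ≤ 0 ∧ 0 ≤ p 2})
      = volume (K ∩ {p : E3 | 0 ≤ p 0 ∧ p 1 ≤ 0 ∧ 0 ≤ p 2}) ∧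
    μH[2] (K ∩ {p : E3 | p 0 = 0 ∧ 0 ≤ p 1 ∧ 0 ≤ p 2})
      = μH[2] (K ∩ {p : E3 | p 0 = 0 ∧ p 1 ≤ 0 ∧ 0 ≤ p 2}) ∧
    μH[2] (K ∩ {p : E3 | p 1 = 0 ∧ 0 ≤ p 0 ∧ 0 ≤ p 2})
      = μH[2] (K ∩ {p : E3 | p 1 = 0 ∧ 0 ≤ p 0 ∧ p 2 ≤ 0}) ∧
    μH[2] (K ∩ {p : E3 | p 2 = 0 ∧ 0 ≤ p 0 ∧ 0 ≤ p 1})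
      = μH[2] (K ∩ {p : E3 | p 2 = 0 ∧ p 0 ≤ 0 ∧ 0 ≤ p 1})

/-- The cube `[-1,1]³`. -/
def cube : Set E3 := {x : E3 | ∀ i, x i ∈ Icc (-1:ℝ) 1}

/-- The cross product on `ℝ³`. -/
def cross (a b : E3) : E3 :=
  pt (a 1 * b 2 - a 2 * b 1) (a 2 * b 0 - a 0 * b 2) (a 0 * b 1 - a 1 * b 0)

/-!
Since `K = -K`, the rotation `Y(π)` acts on `K` as the reflection `reflY : y ↦ -y`, and
`reflY (P(α, β)) = P(α, π - β)`. Hence the densities whose halving points define `Θ` and `Φ`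
for `Y(π)K` are those of `K` reflected at `π/2` (for `Φ` one also uses `ρ_K(-x) = ρ_K(x)`),
while the density defining `Ψ` is unchanged; positivity of the densities makes halving points
unique. Finally `reflY` conjugates `shear (π - Θ) (π - Φ) Ψ` into `shear Θ Φ Ψ`, so the
normalized body of `Y(π)K` is the mirror image of that of `K`, which swaps the quadrants
`y ≥ 0` and `y ≤ 0`.
-/

open Topology

@[simp] lemma pt_apply_zero (a b c : ℝ) : pt a b c 0 = a := rfl
@[simp] lemma pt_apply_one (a b c : ℝ) : pt a b c 1 = b := rfl
@[simp] lemma pt_apply_two (a b c : ℝ) : pt a b c 2 = c := rfl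

lemma E3.ext_coords {p q : E3} (h0 : p 0 = q 0) (h1 : p 1 = q 1) (h2 : p 2 = q 2) : p = q := by
  ext i; fin_cases i <;> assumption

@[fun_prop]
lemma continuous_pt {X : Type*} [TopologicalSpace X] {f g h : X → ℝ} (hf : Continuous f)
    (hg : Continuous g) (hh : Continuous h) : Continuous fun x => pt (f x) (g x) (h x) := by
  refine (PiLp.continuous_toLp 2 _).comp (continuous_pi fun i => ?_)
  fin_cases i <;> assumption

@[fun_prop]
lemma continuous_sphP {X : Type*} [TopologicalSpace X] {f g : X → ℝ} (hf : Continuous f)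
    (hg : Continuous g) : Continuous fun x => sphP (f x) (g x) := by
  unfold sphP; fun_prop

lemma sphP_ne_zero (α β : ℝ) : sphP α β ≠ 0 := by
  intro h
  have h0 : cos α = 0 := congrArg (· 0) h
  have h1 : sin α * cos β = 0 := congrArg (· 1) h
  have h2 : sin α * sin β = 0 := congrArg (· 2) h
  nlinarith [sin_sq_add_cos_sq α, sin_sq_add_cos_sq β]

lemma sphP_pi (α : ℝ) : sphP α π = -sphP (π - α) 0 := by
  apply E3.ext_coords <;> simp [sphP, cos_pi_sub, sin_pi_sub]

def reflY : E3 ≃ₗᵢ[ℝ] E3 where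
  toLinearEquiv := LinearEquiv.ofInvolutive
    { toFun p := pt (p 0) (-p 1) (p 2)
      map_add' p q := by apply E3.ext_coords <;> simp [add_comm]
      map_smul' t p := by apply E3.ext_coords <;> simp }
    fun p => by apply E3.ext_coords <;> simp
  norm_map' p := by
    change ‖pt (p 0) (-p 1) (p 2)‖ = ‖p‖
    simp [EuclideanSpace.norm_eq, Fin.sum_univ_three]

@[simp] lemma reflY_apply_zero (p : E3) : reflY p 0 = p 0 := rfl
@[simp] lemma reflY_apply_one (p : E3) : reflY p 1 = -p 1 := rfl
@[simp] lemma reflY_apply_two (p : E3) : reflY p 2 = p 2 := rfl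

lemma reflY_reflY (p : E3) : reflY (reflY p) = p := by
  apply E3.ext_coords <;> simp

lemma reflY_sphP (α β : ℝ) : reflY (sphP α β) = sphP α (π - β) := by
  apply E3.ext_coords <;> simp [sphP, cos_pi_sub, sin_pi_sub]

lemma reflY_shear_pi_sub (Θ Φ Ψ : ℝ) (p : E3) :
    reflY (shear (π - Θ) (π - Φ) Ψ p) = shear Θ Φ Ψ (reflY p) := by
  apply E3.ext_coords <;> simp [shear, tan_pi_sub, sin_pi_sub] <;> ring

lemma shear_pi_sub_preimage_reflY_preimage (Θ Φ Ψ : ℝ) (K : Set E3) :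
    shear (π - Θ) (π - Φ) Ψ ⁻¹' (reflY ⁻¹' K) = reflY ⁻¹' (shear Θ Φ Ψ ⁻¹' K) := by
  ext p
  simp only [mem_preimage, reflY_shear_pi_sub]

lemma rotY_pi_image_eq_preimage_reflY {K : Set E3} (hsymm : K = -K) :
    rotY π '' K = reflY ⁻¹' K := by
  have hrot : ∀ p, rotY π p = -reflY p := fun p => by
    apply E3.ext_coords <;> simp [rotY]
  ext p
  constructor
  · rintro ⟨q, hq, rfl⟩
    rw [mem_preimage, hrot, map_neg, reflY_reflY]
    rwa [hsymm, neg_mem_neg]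
  · intro hp
    refine ⟨-reflY p, ?_, by rw [hrot, map_neg, reflY_reflY, neg_neg]⟩
    rwa [hsymm, neg_mem_neg]

lemma preimage_reflY_inter (L A : Set E3) :
    reflY ⁻¹' L ∩ A = reflY ⁻¹' (L ∩ reflY ⁻¹' A) := by
  ext p; simp [reflY_reflY]

lemma volume_preimage_reflY_inter (L A : Set E3) :
    volume (reflY ⁻¹' L ∩ A) = volume (L ∩ reflY ⁻¹' A) := by
  rw [preimage_reflY_inter]
  exact reflY.measurePreserving.measure_preimage_equiv (f := reflY.toMeasurableEquiv) _

lemma hausdorffMeasure_preimage_reflY_inter (d : ℝ) (L A : Set E3) :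
    μH[d] (reflY ⁻¹' L ∩ A) = μH[d] (L ∩ reflY ⁻¹' A) := by
  rw [preimage_reflY_inter]
  exact reflY.toIsometryEquiv.hausdorffMeasure_preimage d _

lemma vol₁_preimage_reflY (L : Set E3) : vol₁ (reflY ⁻¹' L) = vol₄ L := by
  rw [vol₁, vol₄, volume_preimage_reflY_inter]; congr 3; ext p; simp

lemma vol₂_preimage_reflY (L : Set E3) : vol₂ (reflY ⁻¹' L) = vol₃ L := by
  rw [vol₂, vol₃, volume_preimage_reflY_inter]; congr 3; ext p; simp

lemma vol₃_preimage_reflY (L : Set E3) : vol₃ (reflY ⁻¹' L) = vol₂ L := by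
  rw [vol₃, vol₂, volume_preimage_reflY_inter]; congr 3; ext p; simp

lemma vol₄_preimage_reflY (L : Set E3) : vol₄ (reflY ⁻¹' L) = vol₁ L := by
  rw [vol₄, vol₁, volume_preimage_reflY_inter]; congr 3; ext p; simp

lemma Ffun_preimage_reflY (L : Set E3) : Ffun (reflY ⁻¹' L) = -Ffun L := by
  simp only [Ffun, hausdorffMeasure_preimage_reflY_inter]
  rw [neg_sub]; congr 4 <;> ext p <;> simp

lemma Gfun_preimage_reflY (L : Set E3) : Gfun (reflY ⁻¹' L) = -Gfun L := by
  simp only [Gfun, vol₁_preimage_reflY, vol₂_preimage_reflY, vol₃_preimage_reflY,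
    vol₄_preimage_reflY]
  ring

lemma Hfun_preimage_reflY (L : Set E3) : Hfun (reflY ⁻¹' L) = Hfun L := by
  simp only [Hfun, vol₁_preimage_reflY, vol₂_preimage_reflY, vol₃_preimage_reflY,
    vol₄_preimage_reflY]
  ring

lemma radial_preimage {F : Type*} [FunLike F E3 E3] [LinearMapClass F ℝ E3 E3] (f : F)
    (K : Set E3) (x : E3) : radial (f ⁻¹' K) x = radial K (f x) := by
  simp only [radial, mem_preimage, map_smul]

lemma radial_neg {K : Set E3} (hsymm : K = -K) (x : E3) : radial K (-x) = radial K x := by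
  conv_rhs => rw [hsymm]
  exact (radial_preimage (-LinearMap.id : E3 →ₗ[ℝ] E3) K x).symm

lemma zero_mem_interior_of_neg_eq {E : Type*} [AddCommGroup E] [Module ℝ E] [TopologicalSpace E]
    [IsTopologicalAddGroup E] [ContinuousSMul ℝ E] {K : Set E} (hconv : Convex ℝ K)
    (hsymm : K = -K) (hint : (interior K).Nonempty) : (0 : E) ∈ interior K := by
  obtain ⟨x, hx⟩ := hint
  have hnx : -x ∈ interior K := by
    have h : -x ∈ Homeomorph.neg E ⁻¹' interior K := by simpa using hx
    rw [(Homeomorph.neg E).preimage_interior] at h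
    rw [hsymm]
    exact h
  simpa using
    hconv.interior hx hnx (a := 1 / 2) (b := 1 / 2) (by norm_num) (by norm_num) (by norm_num)

lemma gauge_pos_of_isCompact {E : Type*} [NormedAddCommGroup E] [NormedSpace ℝ E] {K : Set E}
    (hcomp : IsCompact K) (hnhds : K ∈ 𝓝 0) {x : E} (hx : x ≠ 0) : 0 < gauge K x :=
  (gauge_pos (absorbent_nhds_zero hnhds)
    ((NormedSpace.isVonNBounded_iff ℝ).2 hcomp.isBounded)).2 hx

def IsHalvingPoint (f : ℝ → ℝ) (a : ℝ) : Prop :=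
  ∫ x in (0 : ℝ)..a, f x = ∫ x in a..π, f x

lemma IsHalvingPoint.comp_pi_sub {f : ℝ → ℝ} {a : ℝ}
    (h : IsHalvingPoint (fun x => f (π - x)) a) : IsHalvingPoint f (π - a) := by
  unfold IsHalvingPoint at h ⊢
  rw [intervalIntegral.integral_comp_sub_left f π, intervalIntegral.integral_comp_sub_left f π,
    sub_zero, sub_self] at h
  exact h.symm

lemma IsHalvingPoint.unique {f : ℝ → ℝ} (hf : Continuous f) (hpos : ∀ x, 0 < f x) {a b : ℝ}
    (ha : IsHalvingPoint f a) (hb : IsHalvingPoint f b) : a = b := by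
  have hi : ∀ u v, IntervalIntegrable f volume u v := hf.intervalIntegrable
  have hab : ∫ x in a..b, f x = 0 := by
    have h0ab := intervalIntegral.integral_add_adjacent_intervals (hi 0 a) (hi a b)
    have habπ := intervalIntegral.integral_add_adjacent_intervals (hi a b) (hi b π)
    unfold IsHalvingPoint at ha hb
    linarith
  rcases lt_trichotomy a b with h | h | h
  · exact absurd hab (intervalIntegral.intervalIntegral_pos_of_pos (hi a b) hpos h).ne'
  · exact h
  · rw [intervalIntegral.integral_symm, neg_eq_zero] at hab
    exact absurd hab (intervalIntegral.intervalIntegral_pos_of_pos (hi b a) hpos h).ne'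

def thetaDensity (K : Set E3) (β : ℝ) : ℝ := ∫ α in (0 : ℝ)..π, radial K (sphP α β) ^ 3 * sin α

def meridianDensity (K : Set E3) (β α : ℝ) : ℝ := radial K (sphP α β) ^ 2

lemma ThetaEq.isHalvingPoint {K : Set E3} {Θ : ℝ} (h : ThetaEq K Θ) :
    IsHalvingPoint (thetaDensity K) Θ :=
  h.2

lemma PhiEq.isHalvingPoint {K : Set E3} {Φ : ℝ} (h : PhiEq K Φ) :
    IsHalvingPoint (meridianDensity K 0) Φ :=
  h.2

lemma PsiEq.isHalvingPoint {K : Set E3} {Θ Ψ : ℝ} (h : PsiEq K Θ Ψ) :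
    IsHalvingPoint (meridianDensity K Θ) Ψ :=
  h.2

lemma thetaDensity_preimage_reflY (K : Set E3) :
    thetaDensity (reflY ⁻¹' K) = fun β => thetaDensity K (π - β) := by
  ext β
  simp only [thetaDensity, radial_preimage reflY, reflY_sphP]

lemma meridianDensity_preimage_reflY (K : Set E3) (β : ℝ) :
    meridianDensity (reflY ⁻¹' K) β = meridianDensity K (π - β) := by
  ext α
  simp only [meridianDensity, radial_preimage reflY, reflY_sphP]

lemma meridianDensity_pi {K : Set E3} (hsymm : K = -K) :
    meridianDensity K π = fun α => meridianDensity K 0 (π - α) := by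
  ext α
  rw [meridianDensity, meridianDensity, sphP_pi, radial_neg hsymm]

section ConvexBody

variable {K : Set E3} (hcomp : IsCompact K) (hconv : Convex ℝ K) (hnhds : K ∈ 𝓝 0)
include hcomp hconv hnhds

lemma radial_eq_inv_gauge {x : E3} (hx : x ≠ 0) : radial K x = (gauge K x)⁻¹ := by
  have hg := gauge_pos_of_isCompact hcomp hnhds hx
  have hmem : ∀ y, y ∈ K ↔ gauge K y ≤ 1 := fun y => by
    rw [gauge_le_one_iff_mem_closure hconv hnhds, hcomp.isClosed.closure_eq]
  have hset : {t : ℝ | 0 ≤ t ∧ t • x ∈ K} = Icc 0 (gauge K x)⁻¹ := by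
    ext t
    simp only [mem_ofPred_eq, mem_Icc, and_congr_right_iff]
    intro ht
    rw [hmem, gauge_smul_of_nonneg ht, smul_eq_mul, ← le_div_iff₀ hg, one_div]
  rw [radial, hset, csSup_Icc (by positivity)]

lemma radial_pos {x : E3} (hx : x ≠ 0) : 0 < radial K x := by
  rw [radial_eq_inv_gauge hcomp hconv hnhds hx]
  exact inv_pos.2 (gauge_pos_of_isCompact hcomp hnhds hx)

lemma continuousOn_radial : ContinuousOn (radial K) {0}ᶜ :=
  ((continuous_gauge hconv hnhds).continuousOn.inv₀ fun _ hx =>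
    (gauge_pos_of_isCompact hcomp hnhds hx).ne').congr fun _ hx =>
    radial_eq_inv_gauge hcomp hconv hnhds hx

lemma continuous_radial_sphP : Continuous fun q : ℝ × ℝ => radial K (sphP q.1 q.2) :=
  (continuousOn_radial hcomp hconv hnhds).comp_continuous (by fun_prop)
    fun q => sphP_ne_zero q.1 q.2

lemma continuous_meridianDensity (β : ℝ) : Continuous (meridianDensity K β) :=
  ((continuous_radial_sphP hcomp hconv hnhds).comp (Continuous.prodMk_left β)).pow 2

lemma meridianDensity_pos (β α : ℝ) : 0 < meridianDensity K β α :=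
  pow_pos (radial_pos hcomp hconv hnhds (sphP_ne_zero α β)) 2

lemma continuous_thetaDensity : Continuous (thetaDensity K) := by
  have h : Continuous (Function.uncurry fun β α => radial K (sphP α β) ^ 3 * sin α) :=
    (((continuous_radial_sphP hcomp hconv hnhds).comp continuous_swap).pow 3).mul
      (continuous_sin.comp continuous_snd)
  exact intervalIntegral.continuous_parametric_intervalIntegral_of_continuous' h 0 π

lemma thetaDensity_pos (β : ℝ) : 0 < thetaDensity K β := by
  have h : Continuous fun α => radial K (sphP α β) ^ 3 * sin α :=
    (((continuous_radial_sphP hcomp hconv hnhds).comp (Continuous.prodMk_left β)).pow 3).mul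
      continuous_sin
  refine intervalIntegral.intervalIntegral_pos_of_pos_on (h.intervalIntegrable 0 π)
    (fun α hα => ?_) pi_pos
  exact mul_pos (pow_pos (radial_pos hcomp hconv hnhds (sphP_ne_zero α β)) 3)
    (sin_pos_of_pos_of_lt_pi hα.1 hα.2)

end ConvexBody

/-- Lemmas 5.8 and 5.9: for `K ∈ 𝒦̂`, `Θ(Y(π)K) = π − Θ(K)`, `Φ(Y(π)K) = π − Φ(K)`,
`Ψ(Y(π)K) = Ψ(K)`, and `F(Y(π)K) = −F(K)`, `G(Y(π)K) = −G(K)`, `H(Y(π)K) = H(K)`. -/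
theorem FGH_rotY_pi (K : Set E3) (hK : IsKhat K)
    (Θ Φ Ψ : ℝ) (hΘ : ThetaEq K Θ) (hΦ : PhiEq K Φ) (hΨ : PsiEq K Θ Ψ)
    (Θ' Φ' Ψ' : ℝ)
    (hΘ' : ThetaEq (rotY π '' K) Θ')
    (hΦ' : PhiEq (rotY π '' K) Φ')
    (hΨ' : PsiEq (rotY π '' K) Θ' Ψ') :
    Θ' = π - Θ ∧ Φ' = π - Φ ∧ Ψ' = Ψ ∧
      Ffun (shear Θ' Φ' Ψ' ⁻¹' (rotY π '' K)) = -Ffun (shear Θ Φ Ψ ⁻¹' K) ∧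
      Gfun (shear Θ' Φ' Ψ' ⁻¹' (rotY π '' K)) = -Gfun (shear Θ Φ Ψ ⁻¹' K) ∧
      Hfun (shear Θ' Φ' Ψ' ⁻¹' (rotY π '' K)) = Hfun (shear Θ Φ Ψ ⁻¹' K) := by
  obtain ⟨hcomp, hconv, hint, hsymm, -, -⟩ := hK
  have hnhds : K ∈ 𝓝 0 :=
    mem_interior_iff_mem_nhds.1 (zero_mem_interior_of_neg_eq hconv hsymm hint)
  rw [rotY_pi_image_eq_preimage_reflY hsymm] at hΘ' hΦ' hΨ' ⊢
  have hΘ'_eq : Θ' = π - Θ := by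
    have h := hΘ'.isHalvingPoint
    rw [thetaDensity_preimage_reflY] at h
    linarith [h.comp_pi_sub.unique (continuous_thetaDensity hcomp hconv hnhds)
      (thetaDensity_pos hcomp hconv hnhds) hΘ.isHalvingPoint]
  have hΦ'_eq : Φ' = π - Φ := by
    have h := hΦ'.isHalvingPoint
    rw [meridianDensity_preimage_reflY, sub_zero, meridianDensity_pi hsymm] at h
    linarith [h.comp_pi_sub.unique (continuous_meridianDensity hcomp hconv hnhds 0)
      (meridianDensity_pos hcomp hconv hnhds 0) hΦ.isHalvingPoint]
  have hΨ'_eq : Ψ' = Ψ := by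
    have h := hΨ'.isHalvingPoint
    rw [meridianDensity_preimage_reflY, hΘ'_eq, sub_sub_cancel] at h
    exact h.unique (continuous_meridianDensity hcomp hconv hnhds Θ)
      (meridianDensity_pos hcomp hconv hnhds Θ) hΨ.isHalvingPoint
  subst hΘ'_eq hΦ'_eq hΨ'_eq
  rw [shear_pi_sub_preimage_reflY_preimage]
  exact ⟨rfl, rfl, rfl, Ffun_preimage_reflY _, Gfun_preimage_reflY _, Hfun_preimage_reflY _⟩
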